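/- Let M be a perfect matching of G (n even) and let N be a set of n/6 edges of G, none belonging to M, such that no edge of M contains an endpoint of more than one edge of N. Then there exists a perfect 3-path packing P of G with w(P) ≥ w(M) + c(N). -/

import Mathlib

open Finset
open scoped Classical

namespace MW3PP

/-- A 3-path `xyz`: a path on three distinct vertices with middle vertex `y`. -/
structure P3 (V : Type*) where
  x : V
  y : V
  z : V
  hxy : x ≠ y
  hyz : y ≠ z
  hxz : x ≠ z

variable {V : Type*} [Fintype V] [DecidableEq V]

/-- The vertex set of a 3-path. -/
def P3.verts (p : P3 V) : Finset V := {p.x, p.y, p.z}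

/-- The two edges of a 3-path. -/
def P3.edges (p : P3 V) : Finset (Sym2 V) := {s(p.x, p.y), s(p.y, p.z)}

/-- The weight of a 3-path. -/
def P3.wt (w : Sym2 V → ℝ) (p : P3 V) : ℝ := w s(p.x, p.y) + w s(p.y, p.z)

/-- The total weight of a set of edges. -/
def ew (w : Sym2 V → ℝ) (F : Finset (Sym2 V)) : ℝ := ∑ e ∈ F, w e

/-- The total weight of a set of 3-paths. -/
def pw (w : Sym2 V → ℝ) (P : Finset (P3 V)) : ℝ := ∑ p ∈ P, p.wt w

/-- `∑_{xyz ∈ S} max (w (xy)) (w (yz))`. -/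
def maxSum (w : Sym2 V → ℝ) (S : Finset (P3 V)) : ℝ :=
  ∑ p ∈ S, max (w s(p.x, p.y)) (w s(p.y, p.z))

/-- A perfect 3-path packing: `n/3` pairwise vertex-disjoint 3-paths covering all vertices. -/
def IsPacking (P : Finset (P3 V)) : Prop :=
  P.card = Fintype.card V / 3 ∧
  (∀ p ∈ P, ∀ q ∈ P, p ≠ q → Disjoint p.verts q.verts) ∧
  (∀ v : V, ∃ p ∈ P, v ∈ p.verts)

/-- A maximum-weight perfect 3-path packing. -/
def IsMaxPacking (w : Sym2 V → ℝ) (P : Finset (P3 V)) : Prop :=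
  IsPacking P ∧ ∀ Q : Finset (P3 V), IsPacking Q → pw w Q ≤ pw w P

/-- A matching: a set of pairwise vertex-disjoint (non-loop) edges. -/
def IsMatching (M : Finset (Sym2 V)) : Prop :=
  (∀ e ∈ M, ¬ e.IsDiag) ∧
  ∀ e ∈ M, ∀ f ∈ M, e ≠ f → ∀ v : V, v ∈ e → v ∉ f

/-- A maximum-weight matching among all matchings of size `k`. -/
def IsMaxMatchingOfSize (w : Sym2 V → ℝ) (k : ℕ) (M : Finset (Sym2 V)) : Prop :=
  IsMatching M ∧ M.card = k ∧
  ∀ M' : Finset (Sym2 V), IsMatching M' → M'.card = k → ew w M' ≤ ew w M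

/-- `v ∈ V(M)` : vertex `v` is covered by the matching `M`. -/
def covered (M : Finset (Sym2 V)) (v : V) : Prop := ∃ e ∈ M, v ∈ e

/-- `e_u` : the edge of `M` containing `u` (junk value if there is none). -/
noncomputable def eMatch (M : Finset (Sym2 V)) (u : V) : Sym2 V :=
  if h : ∃ e ∈ M, u ∈ e then h.choose else s(u, u)

/-- The cost `c` of an edge with respect to a matching `M`:
`c(uv) = w(uv) - min (w (e_u)) (w (e_v))` if both endpoints are covered by `M`,
and `c(uv) = w(uv)` otherwise. -/
noncomputable def cost (w : Sym2 V → ℝ) (M : Finset (Sym2 V)) : Sym2 V → ℝ :=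
  Sym2.lift ⟨fun u v =>
    if covered M u ∧ covered M v then
      w s(u, v) - min (w (eMatch M u)) (w (eMatch M v))
    else w s(u, v), by
      intro u v
      dsimp only
      by_cases h : covered M u ∧ covered M v
      · rw [if_pos h, if_pos (show covered M v ∧ covered M u from ⟨h.2, h.1⟩),
          Sym2.eq_swap, min_comm]
      · rw [if_neg h, if_neg (show ¬(covered M v ∧ covered M u) from fun h' => h ⟨h'.2, h'.1⟩),
          Sym2.eq_swap]⟩

/-- The total cost of a set of edges. -/
noncomputable def cw (w : Sym2 V → ℝ) (M F : Finset (Sym2 V)) : ℝ := ∑ e ∈ F, cost w M e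

/-- The number of vertices of the 3-path `p` covered by `M`. -/
noncomputable def kcnt (M : Finset (Sym2 V)) (p : P3 V) : ℕ :=
  (p.verts.filter fun v => covered M v).card

/-- Exactly one of the two edges of `p` lies in `M`. -/
def exOne (M : Finset (Sym2 V)) (p : P3 V) : Prop :=
  (s(p.x, p.y) ∈ M ∧ s(p.y, p.z) ∉ M) ∨ (s(p.x, p.y) ∉ M ∧ s(p.y, p.z) ∈ M)

def cls1 (M : Finset (Sym2 V)) (p : P3 V) : Prop := kcnt M p = 0
def cls2 (M : Finset (Sym2 V)) (p : P3 V) : Prop := kcnt M p = 1 ∧ ¬ covered M p.y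
def cls3 (M : Finset (Sym2 V)) (p : P3 V) : Prop := kcnt M p = 1 ∧ covered M p.y
def cls4 (M : Finset (Sym2 V)) (p : P3 V) : Prop := kcnt M p = 2 ∧ ¬ covered M p.y
def cls5 (M : Finset (Sym2 V)) (p : P3 V) : Prop := kcnt M p = 2 ∧ covered M p.y ∧ exOne M p
def cls6 (M : Finset (Sym2 V)) (p : P3 V) : Prop :=
  kcnt M p = 2 ∧ covered M p.y ∧ s(p.x, p.y) ∉ M ∧ s(p.y, p.z) ∉ M
def cls7 (M : Finset (Sym2 V)) (p : P3 V) : Prop := kcnt M p = 3 ∧ exOne M p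
def cls8 (M : Finset (Sym2 V)) (p : P3 V) : Prop :=
  kcnt M p = 3 ∧ s(p.x, p.y) ∉ M ∧ s(p.y, p.z) ∉ M

/-- The subset of a set of 3-paths satisfying a predicate. -/
noncomputable def psel (P : Finset (P3 V)) (c : P3 V → Prop) : Finset (P3 V) := P.filter c

/-- The set of all edges of the 3-paths in `S`. -/
def Esub (S : Finset (P3 V)) : Finset (Sym2 V) := S.biUnion P3.edges

/-- The heaviest edge of a 3-path (the edge `xy` in case of a tie). -/
noncomputable def heavy (w : Sym2 V → ℝ) (p : P3 V) : Sym2 V :=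
  if w s(p.y, p.z) ≤ w s(p.x, p.y) then s(p.x, p.y) else s(p.y, p.z)

noncomputable def X1 (w : Sym2 V → ℝ) (P : Finset (P3 V)) (M : Finset (Sym2 V)) :
    Finset (Sym2 V) := (psel P (cls1 M)).image (heavy w)
noncomputable def X2 (P : Finset (P3 V)) (M : Finset (Sym2 V)) : Finset (Sym2 V) :=
  (psel P (cls2 M)).image fun p => if covered M p.x then s(p.x, p.y) else s(p.y, p.z)
noncomputable def X3 (w : Sym2 V → ℝ) (P : Finset (P3 V)) (M : Finset (Sym2 V)) :
    Finset (Sym2 V) := (psel P (cls3 M)).image (heavy w)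
noncomputable def X4 (w : Sym2 V → ℝ) (P : Finset (P3 V)) (M : Finset (Sym2 V)) :
    Finset (Sym2 V) := (psel P (cls4 M)).image (heavy w)
noncomputable def X5 (P : Finset (P3 V)) (M : Finset (Sym2 V)) : Finset (Sym2 V) :=
  (psel P (cls5 M)).image fun p => if s(p.x, p.y) ∈ M then s(p.y, p.z) else s(p.x, p.y)
noncomputable def X6 (P : Finset (P3 V)) (M : Finset (Sym2 V)) : Finset (Sym2 V) :=
  (psel P (cls6 M)).image fun p => if covered M p.x then s(p.y, p.z) else s(p.x, p.y)
noncomputable def X7 (P : Finset (P3 V)) (M : Finset (Sym2 V)) : Finset (Sym2 V) :=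
  (psel P (cls7 M)).image fun p => if s(p.x, p.y) ∈ M then s(p.y, p.z) else s(p.x, p.y)
noncomputable def X8 (w : Sym2 V → ℝ) (P : Finset (P3 V)) (M : Finset (Sym2 V)) :
    Finset (Sym2 V) := (psel P (cls8 M)).image (heavy w)

noncomputable def Y1 (w : Sym2 V → ℝ) (P : Finset (P3 V)) (M : Finset (Sym2 V)) :
    Finset (Sym2 V) := Esub (psel P (cls1 M)) \ X1 w P M
noncomputable def Y2 (P : Finset (P3 V)) (M : Finset (Sym2 V)) : Finset (Sym2 V) :=
  Esub (psel P (cls2 M)) \ X2 P M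
noncomputable def Y3 (w : Sym2 V → ℝ) (P : Finset (P3 V)) (M : Finset (Sym2 V)) :
    Finset (Sym2 V) := Esub (psel P (cls3 M)) \ X3 w P M
noncomputable def Y4 (w : Sym2 V → ℝ) (P : Finset (P3 V)) (M : Finset (Sym2 V)) :
    Finset (Sym2 V) := Esub (psel P (cls4 M)) \ X4 w P M
noncomputable def Y5 (P : Finset (P3 V)) (M : Finset (Sym2 V)) : Finset (Sym2 V) :=
  Esub (psel P (cls5 M)) \ X5 P M
noncomputable def Y6 (P : Finset (P3 V)) (M : Finset (Sym2 V)) : Finset (Sym2 V) :=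
  Esub (psel P (cls6 M)) \ X6 P M
noncomputable def Y7 (P : Finset (P3 V)) (M : Finset (Sym2 V)) : Finset (Sym2 V) :=
  Esub (psel P (cls7 M)) \ X7 P M
noncomputable def Y8 (w : Sym2 V → ℝ) (P : Finset (P3 V)) (M : Finset (Sym2 V)) :
    Finset (Sym2 V) := Esub (psel P (cls8 M)) \ X8 w P M

/-- An edge is a middle edge (w.r.t. `M`) if exactly one of its endpoints lies in `V(M)`. -/
def isMiddle (M : Finset (Sym2 V)) (e : Sym2 V) : Prop :=
  ∃ u v : V, e = s(u, v) ∧ covered M u ∧ ¬ covered M v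

/-- Two edges share a vertex. -/
def shares (e f : Sym2 V) : Prop := ∃ v, v ∈ e ∧ v ∈ f

/-- `g` is a middle edge of some 3-path in `S`. -/
def middleIn (M : Finset (Sym2 V)) (S : Finset (P3 V)) (g : Sym2 V) : Prop :=
  (∃ p ∈ S, g ∈ p.edges) ∧ isMiddle M g

/-- The 3-paths of `P` lying in classes 2, 3 or 4. -/
noncomputable def P234 (P : Finset (P3 V)) (M : Finset (Sym2 V)) : Finset (P3 V) :=
  psel P fun p => cls2 M p ∨ cls3 M p ∨ cls4 M p

/-- `M_1`: edges of `M` sharing a vertex with at least one middle edge of a 3-path of `P*_6`. -/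
noncomputable def Mset1 (P : Finset (P3 V)) (M : Finset (Sym2 V)) : Finset (Sym2 V) :=
  M.filter fun f => ∃ g, middleIn M (psel P (cls6 M)) g ∧ shares f g

/-- `M_2`: edges of `M` sharing a vertex with at least one middle edge, all middle edges met
belonging to 3-paths of `P*_2 ∪ P*_3 ∪ P*_4`. -/
noncomputable def Mset2 (P : Finset (P3 V)) (M : Finset (Sym2 V)) : Finset (Sym2 V) :=
  M.filter fun f =>
    (∃ g, middleIn M P g ∧ shares f g) ∧
    ∀ g, middleIn M P g → shares f g → middleIn M (P234 P M) g

/-- `M_3 = M ∩ E(P*_7)`. -/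
noncomputable def Mset3 (P : Finset (P3 V)) (M : Finset (Sym2 V)) : Finset (Sym2 V) :=
  M ∩ Esub (psel P (cls7 M))

/-- `M_4 = M ∩ E(P*_5)`. -/
noncomputable def Mset4 (P : Finset (P3 V)) (M : Finset (Sym2 V)) : Finset (Sym2 V) :=
  M ∩ Esub (psel P (cls5 M))

/-- The middle edges of 3-paths of `P*_6`. -/
noncomputable def mid6 (P : Finset (P3 V)) (M : Finset (Sym2 V)) : Finset (Sym2 V) :=
  (Esub (psel P (cls6 M))).filter (isMiddle M)

/-- `M'_1`: edges of `M_1` meeting exactly one middle edge of a 3-path of `P*_6` and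
no middle edge of a 3-path of `P*_2 ∪ P*_3 ∪ P*_4`. -/
noncomputable def Mset1' (P : Finset (P3 V)) (M : Finset (Sym2 V)) : Finset (Sym2 V) :=
  (Mset1 P M).filter fun f =>
    ((mid6 P M).filter fun g => shares f g).card = 1 ∧
    ∀ g, middleIn M (P234 P M) g → ¬ shares f g

/-- `M''_1`: edges of `M_1` meeting two middle edges of 3-paths of `P*_6`. -/
noncomputable def Mset1'' (P : Finset (P3 V)) (M : Finset (Sym2 V)) : Finset (Sym2 V) :=
  (Mset1 P M).filter fun f => ((mid6 P M).filter fun g => shares f g).card = 2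

/-- `M'''_1`: edges of `M_1` meeting exactly one middle edge of a 3-path of `P*_6` and
at least one middle edge of a 3-path of `P*_2 ∪ P*_3 ∪ P*_4`. -/
noncomputable def Mset1''' (P : Finset (P3 V)) (M : Finset (Sym2 V)) : Finset (Sym2 V) :=
  (Mset1 P M).filter fun f =>
    ((mid6 P M).filter fun g => shares f g).card = 1 ∧
    ∃ g, middleIn M (P234 P M) g ∧ shares f g

/-- Assumption on `P*`: for every 3-path `xyz ∈ P*` with `y ∉ V(M)` and `x, z ∈ V(M)`,
the vertices `x` and `z` lie in two distinct edges of `M`. -/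
def Ass (P : Finset (P3 V)) (M : Finset (Sym2 V)) : Prop :=
  ∀ p ∈ P, ¬ covered M p.y → covered M p.x → covered M p.z →
    ∃ e ∈ M, ∃ f ∈ M, p.x ∈ e ∧ p.z ∈ f ∧ e ≠ f

/-- An admissible edge w.r.t. `M`: either both endpoints are in `V(M)` and lie in two distinct
edges of `M`, or exactly one endpoint is in `V(M)`. -/
def goodEdge (M : Finset (Sym2 V)) (e : Sym2 V) : Prop :=
  (∃ u v : V, e = s(u, v) ∧ covered M u ∧ covered M v ∧ ∀ f ∈ M, ¬(u ∈ f ∧ v ∈ f)) ∨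
  (∃ u v : V, e = s(u, v) ∧ covered M u ∧ ¬ covered M v)

end MW3PP

/-!
Each edge `uv ∈ N` meets exactly the two matching edges `e_u ≠ e_v`, and distinct edges of `N`
meet disjoint pairs, so `n/3` edges of `M` meet `N` and the `n/6` others can be paired with the
edges of `N`. If `uv ∈ N` is paired with `ab ∈ M` and `w(e_v) ≤ w(e_u)`, the 3-paths `u' u v`
(with `e_u = uu'`) and `v' a b` (with `e_v = vv'`) cover the six vertices of `e_u, e_v, ab` and
weigh at least `w(e_u) + w(uv) + w(ab) = w(e_u) + w(e_v) + c(uv) + w(ab)`. Summing over `N`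
gives a perfect 3-path packing of weight at least `w(M) + c(N)`.
-/

namespace MW3PP

variable {V : Type*}

theorem IsMatching.eq_of_mem_of_mem {M : Finset (Sym2 V)} (hM : IsMatching M) {f g : Sym2 V}
    (hf : f ∈ M) (hg : g ∈ M) {x : V} (hxf : x ∈ f) (hxg : x ∈ g) : f = g :=
  by_contra fun hfg => hM.2 f hf g hg hfg x hxf hxg

noncomputable def touching (M : Finset (Sym2 V)) (e : Sym2 V) : Finset (Sym2 V) :=
  M.filter (shares · e)

theorem touching_subset (M : Finset (Sym2 V)) (e : Sym2 V) : touching M e ⊆ M :=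
  filter_subset _ _

theorem pairwiseDisjoint_touching {M N : Finset (Sym2 V)}
    (hNsep : ∀ f ∈ M, ∀ e₁ ∈ N, ∀ e₂ ∈ N, shares f e₁ → shares f e₂ → e₁ = e₂) :
    (N : Set (Sym2 V)).PairwiseDisjoint (touching M) := by
  intro e₁ he₁ e₂ he₂ hne
  refine disjoint_left.2 fun f hf₁ hf₂ => hne ?_
  rw [touching, mem_filter] at hf₁ hf₂
  exact hNsep f hf₁.1 e₁ he₁ e₂ he₂ hf₁.2 hf₂.2

section DecidableEq

variable [DecidableEq V]

theorem IsMatching.disjoint_toFinset {M : Finset (Sym2 V)} (hM : IsMatching M) {f g : Sym2 V}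
    (hf : f ∈ M) (hg : g ∈ M) (hfg : f ≠ g) : Disjoint f.toFinset g.toFinset :=
  disjoint_left.2 fun _ hxf hxg =>
    hfg (hM.eq_of_mem_of_mem hf hg (Sym2.mem_toFinset.1 hxf) (Sym2.mem_toFinset.1 hxg))

theorem IsMatching.disjoint_biUnion_toFinset {M s t : Finset (Sym2 V)} (hM : IsMatching M)
    (hs : s ⊆ M) (ht : t ⊆ M) (hst : Disjoint s t) :
    Disjoint (s.biUnion Sym2.toFinset) (t.biUnion Sym2.toFinset) :=
  (disjoint_biUnion_left _ _ _).2 fun _ hf => (disjoint_biUnion_right _ _ _).2 fun _ hg =>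
    hM.disjoint_toFinset (hs hf) (ht hg) fun h => disjoint_left.1 hst hf (h ▸ hg)

theorem IsMatching.covered_of_card_eq [Fintype V] {M : Finset (Sym2 V)} (hM : IsMatching M)
    (hcard : Fintype.card V = 2 * M.card) (v : V) : covered M v := by
  have hunion : M.biUnion Sym2.toFinset = univ := by
    refine eq_univ_of_card _ ?_
    rw [card_biUnion fun f hf g hg hfg => hM.disjoint_toFinset hf hg hfg,
      sum_congr rfl fun f hf => Sym2.card_toFinset_of_not_isDiag f (hM.1 f hf), sum_const,
      smul_eq_mul, hcard, mul_comm]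
  obtain ⟨f, hf, hvf⟩ := mem_biUnion.1 (hunion ▸ mem_univ v)
  exact ⟨f, hf, Sym2.mem_toFinset.1 hvf⟩

theorem eMatch_spec {M : Finset (Sym2 V)} {u : V} (hu : covered M u) :
    eMatch M u ∈ M ∧ u ∈ eMatch M u := by
  rw [eMatch, dif_pos (show ∃ e ∈ M, u ∈ e from hu)]
  exact hu.choose_spec

theorem cost_mk_of_covered (w : Sym2 V → ℝ) {M : Finset (Sym2 V)} {u v : V} (hu : covered M u)
    (hv : covered M v) :
    cost w M s(u, v) = w s(u, v) - min (w (eMatch M u)) (w (eMatch M v)) := by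
  simp only [cost, Sym2.lift_mk, if_pos (And.intro hu hv)]

theorem touching_mk {M : Finset (Sym2 V)} (hM : IsMatching M) {u v : V} (hu : covered M u)
    (hv : covered M v) : touching M s(u, v) = {eMatch M u, eMatch M v} := by
  ext f
  simp only [touching, shares, mem_filter, Sym2.mem_iff, mem_insert, mem_singleton]
  constructor
  · rintro ⟨hf, x, hxf, rfl | rfl⟩
    · exact Or.inl (hM.eq_of_mem_of_mem hf (eMatch_spec hu).1 hxf (eMatch_spec hu).2)
    · exact Or.inr (hM.eq_of_mem_of_mem hf (eMatch_spec hv).1 hxf (eMatch_spec hv).2)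
  · rintro (rfl | rfl)
    · exact ⟨(eMatch_spec hu).1, u, (eMatch_spec hu).2, Or.inl rfl⟩
    · exact ⟨(eMatch_spec hv).1, v, (eMatch_spec hv).2, Or.inr rfl⟩

theorem eMatch_ne_of_notMem {M : Finset (Sym2 V)} {u v : V} (hu : covered M u)
    (hv : covered M v) (huv : u ≠ v) (hM : s(u, v) ∉ M) : eMatch M u ≠ eMatch M v := by
  intro h
  have huv' : eMatch M u = s(u, v) :=
    (Sym2.mem_and_mem_iff huv).1 ⟨(eMatch_spec hu).2, h ▸ (eMatch_spec hv).2⟩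
  exact hM (huv' ▸ (eMatch_spec hu).1)

theorem card_touching {M : Finset (Sym2 V)} (hM : IsMatching M) (hcov : ∀ v, covered M v)
    {e : Sym2 V} (he : ¬ e.IsDiag) (heM : e ∉ M) : (touching M e).card = 2 := by
  induction e using Sym2.ind with
  | _ u v =>
    rw [touching_mk hM (hcov u) (hcov v),
      card_pair (eMatch_ne_of_notMem (hcov u) (hcov v) (Sym2.mk_isDiag_iff.not.1 he) heM)]

theorem P3.card_verts (p : P3 V) : p.verts.card = 3 := by
  rw [P3.verts, card_insert_of_notMem, card_pair p.hyz]
  simp [p.hxy, p.hxz]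

theorem exists_path_insert (w : Sym2 V → ℝ) {f : Sym2 V} (hf : ¬ f.IsDiag) {a z : V}
    (ha : a ∈ f) (hz : z ∉ f) :
    ∃ p : P3 V, p.verts = insert z f.toFinset ∧ p.wt w = w s(z, a) + w f := by
  obtain ⟨b, rfl⟩ := Sym2.mem_iff_exists.1 ha
  have hab : a ≠ b := Sym2.mk_isDiag_iff.not.1 hf
  refine ⟨⟨z, a, b, fun h => hz (h ▸ Sym2.mem_mk_left a b), hab,
    fun h => hz (h ▸ Sym2.mem_mk_right a b)⟩, ?_, rfl⟩
  rw [Sym2.toFinset_mk_eq]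
  rfl

theorem exists_pathPair_of_le {M : Finset (Sym2 V)} (hM : IsMatching M) {w : Sym2 V → ℝ}
    (hw : ∀ e, 0 ≤ w e) {u v : V} (hu : covered M u) (hv : covered M v) (huv : u ≠ v)
    (hnot : s(u, v) ∉ M) {f : Sym2 V} (hf : f ∈ M) (hft : f ∉ touching M s(u, v))
    (hle : w (eMatch M v) ≤ w (eMatch M u)) :
    ∃ A B : P3 V,
      A.verts ∪ B.verts ⊆ (insert f (touching M s(u, v))).biUnion Sym2.toFinset ∧
      Disjoint A.verts B.verts ∧
      ew w (touching M s(u, v)) + cost w M s(u, v) + w f ≤ A.wt w + B.wt w := by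
  obtain ⟨heu, hueu⟩ := eMatch_spec hu
  obtain ⟨hev, hvev⟩ := eMatch_spec hv
  have hne := eMatch_ne_of_notMem hu hv huv hnot
  have htouch := touching_mk hM hu hv
  rw [htouch, mem_insert, mem_singleton, not_or] at hft
  have hv_eu : v ∉ eMatch M u := fun h => hne (hM.eq_of_mem_of_mem heu hev h hvev)
  have hv_f : v ∉ f := fun h => hft.2 (hM.eq_of_mem_of_mem hf hev h hvev)
  set v' := Sym2.Mem.other hvev
  have hv'ev : v' ∈ eMatch M v := Sym2.other_mem hvev
  have hv'v : v' ≠ v := Sym2.other_ne (hM.1 _ hev) hvev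
  have hv'_eu : v' ∉ eMatch M u := fun h => hne (hM.eq_of_mem_of_mem heu hev h hv'ev)
  have hv'_f : v' ∉ f := fun h => hft.2 (hM.eq_of_mem_of_mem hf hev h hv'ev)
  -- `A = v u u'` extends the heavier matched edge `e_u` by `uv`; `B = v' a b` extends `f`.
  obtain ⟨A, hAv, hAw⟩ := exists_path_insert w (hM.1 _ heu) hueu hv_eu
  obtain ⟨a, ha⟩ : ∃ a, a ∈ f := ⟨_, Sym2.out_fst_mem f⟩
  obtain ⟨B, hBv, hBw⟩ := exists_path_insert w (hM.1 _ hf) ha hv'_f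
  refine ⟨A, B, ?_, ?_, ?_⟩
  · rw [hAv, hBv, htouch]
    intro x hx
    simp only [mem_union, mem_insert, Sym2.mem_toFinset, mem_biUnion, mem_singleton] at hx ⊢
    rcases hx with (rfl | hx) | (rfl | hx)
    · exact ⟨_, Or.inr (Or.inr rfl), hvev⟩
    · exact ⟨_, Or.inr (Or.inl rfl), hx⟩
    · exact ⟨_, Or.inr (Or.inr rfl), hv'ev⟩
    · exact ⟨_, Or.inl rfl, hx⟩
  · rw [hAv, hBv, disjoint_insert_left, disjoint_insert_right, mem_insert, Sym2.mem_toFinset,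
      Sym2.mem_toFinset]
    exact ⟨by tauto, hv'_eu, hM.disjoint_toFinset heu hf (Ne.symm hft.1)⟩
  · rw [htouch, ew, sum_pair hne, cost_mk_of_covered w hu hv, min_eq_right hle, hAw, hBw,
      Sym2.eq_swap]
    linarith [hw s(v', a)]

theorem exists_pathPair {M : Finset (Sym2 V)} (hM : IsMatching M) {w : Sym2 V → ℝ}
    (hw : ∀ e, 0 ≤ w e) (hcov : ∀ v, covered M v) {e : Sym2 V} (he : ¬ e.IsDiag) (heM : e ∉ M)
    {f : Sym2 V} (hf : f ∈ M) (hft : f ∉ touching M e) :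
    ∃ A B : P3 V,
      A.verts ∪ B.verts ⊆ (insert f (touching M e)).biUnion Sym2.toFinset ∧
      Disjoint A.verts B.verts ∧
      ew w (touching M e) + cost w M e + w f ≤ A.wt w + B.wt w := by
  induction e using Sym2.ind with
  | _ u v =>
    have huv : u ≠ v := Sym2.mk_isDiag_iff.not.1 he
    rcases le_total (w (eMatch M v)) (w (eMatch M u)) with hle | hle
    · exact exists_pathPair_of_le hM hw (hcov u) (hcov v) huv heM hf hft hle
    · rw [Sym2.eq_swap] at heM hft ⊢
      exact exists_pathPair_of_le hM hw (hcov v) (hcov u) huv.symm heM hf hft hle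

theorem injOn_of_pairwiseDisjoint_verts {ι : Type*} {s : Finset ι} {p : ι → P3 V}
    (hp : (s : Set ι).PairwiseDisjoint (P3.verts ∘ p)) : Set.InjOn p s := by
  intro i hi j hj hij
  by_contra hne
  have hdisj : Disjoint (p i).verts (p j).verts := hp hi hj hne
  rw [hij, disjoint_self_iff_empty, ← card_eq_zero, P3.card_verts] at hdisj
  exact three_ne_zero hdisj

theorem isPacking_image [Fintype V] {ι : Type*} {s : Finset ι} {p : ι → P3 V}
    (hp : (s : Set ι).PairwiseDisjoint (P3.verts ∘ p)) (hcard : Fintype.card V = 3 * s.card) :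
    IsPacking (s.image p) := by
  have hinj := injOn_of_pairwiseDisjoint_verts hp
  have hunion : s.biUnion (P3.verts ∘ p) = univ := by
    refine eq_univ_of_card _ ?_
    rw [card_biUnion hp, hcard, mul_comm]
    simp [P3.card_verts]
  refine ⟨by rw [card_image_of_injOn hinj, hcard]; omega, ?_, fun v => ?_⟩
  · rintro _ hp' _ hq' hpq
    obtain ⟨i, hi, rfl⟩ := mem_image.1 hp'
    obtain ⟨j, hj, rfl⟩ := mem_image.1 hq'
    exact hp hi hj fun h => hpq (h ▸ rfl)
  · obtain ⟨i, hi, hv⟩ := mem_biUnion.1 (hunion ▸ mem_univ v)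
    exact ⟨p i, mem_image_of_mem p hi, hv⟩

theorem exists_packing_of_blocks [Fintype V] {ι : Type*} [Fintype ι] {M : Finset (Sym2 V)}
    (hM : IsMatching M) {blk : ι → Finset (Sym2 V)} (hblk : ∀ i, blk i ⊆ M)
    (hdisj : Pairwise fun i j => Disjoint (blk i) (blk j)) {A B : ι → P3 V}
    (hsub : ∀ i, (A i).verts ∪ (B i).verts ⊆ (blk i).biUnion Sym2.toFinset)
    (hAB : ∀ i, Disjoint (A i).verts (B i).verts) (hcard : Fintype.card V = 6 * Fintype.card ι)
    (w : Sym2 V → ℝ) :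
    ∃ P : Finset (P3 V), IsPacking P ∧ pw w P = ∑ i, ((A i).wt w + (B i).wt w) := by
  set p : ι × Bool → P3 V := fun ib => cond ib.2 (A ib.1) (B ib.1)
  have hp_sub : ∀ ib, (p ib).verts ⊆ (blk ib.1).biUnion Sym2.toFinset := fun
    | (i, true) => subset_union_left.trans (hsub i)
    | (i, false) => subset_union_right.trans (hsub i)
  have hp : ((univ : Finset (ι × Bool)) : Set (ι × Bool)).PairwiseDisjoint (P3.verts ∘ p) := by
    rintro ⟨i, b⟩ - ⟨j, c⟩ - hne
    by_cases hij : i = j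
    · subst hij
      cases b <;> cases c <;> simp_all [p, Function.onFun, (hAB i).symm]
    · exact (hM.disjoint_biUnion_toFinset (hblk i) (hblk j) (hdisj hij)).mono
        (hp_sub (i, b)) (hp_sub (j, c))
  refine ⟨univ.image p, isPacking_image hp ?_, ?_⟩
  · rw [card_univ, Fintype.card_prod, Fintype.card_bool, hcard]
    ring
  · rw [pw, sum_image (injOn_of_pairwiseDisjoint_verts hp), Fintype.sum_prod_type]
    simp [p]

theorem ew_eq_sum_touching_add_sdiff {M N : Finset (Sym2 V)}
    (hNsep : ∀ f ∈ M, ∀ e₁ ∈ N, ∀ e₂ ∈ N, shares f e₁ → shares f e₂ → e₁ = e₂)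
    (w : Sym2 V → ℝ) :
    ew w M = ∑ e ∈ N, ew w (touching M e) + ew w (M \ N.biUnion (touching M)) := by
  simp only [ew]
  rw [← sum_biUnion (pairwiseDisjoint_touching hNsep), add_comm,
    sum_sdiff (biUnion_subset.2 fun e _ => touching_subset M e)]

theorem pairwise_disjoint_insert_touching {M N : Finset (Sym2 V)}
    (hNsep : ∀ f ∈ M, ∀ e₁ ∈ N, ∀ e₂ ∈ N, shares f e₁ → shares f e₂ → e₁ = e₂)
    {σ : N → Sym2 V} (hσ : Function.Injective σ) (hσN : ∀ e, σ e ∉ N.biUnion (touching M)) :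
    Pairwise fun e₁ e₂ : N =>
      Disjoint (insert (σ e₁) (touching M e₁)) (insert (σ e₂) (touching M e₂)) := by
  intro e₁ e₂ hne
  have hσ' : ∀ e e' : N, σ e ∉ touching M e' := fun e e' h => hσN e (mem_biUnion.2 ⟨e', e'.2, h⟩)
  rw [disjoint_insert_left, disjoint_insert_right, mem_insert]
  exact ⟨not_or.2 ⟨hσ.ne hne, hσ' e₁ e₂⟩, hσ' e₂ e₁,
    pairwiseDisjoint_touching hNsep e₁.2 e₂.2 (Subtype.coe_injective.ne hne)⟩

end DecidableEq

variable [Fintype V] [DecidableEq V]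

theorem statement_1 (n : ℕ) (hn : Fintype.card V = n) (h3 : 3 ∣ n) (h2 : 2 ∣ n)
    (w : Sym2 V → ℝ) (hw : ∀ e : Sym2 V, 0 ≤ w e)
    (M : Finset (Sym2 V)) (hM : IsMatching M) (hMcard : M.card = n / 2)
    (N : Finset (Sym2 V)) (hNcard : N.card = n / 6)
    (hNG : ∀ e ∈ N, ¬ e.IsDiag) (hNM : ∀ e ∈ N, e ∉ M)
    (hNsep : ∀ f ∈ M, ∀ e₁ ∈ N, ∀ e₂ ∈ N, shares f e₁ → shares f e₂ → e₁ = e₂) :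
    ∃ P : Finset (P3 V), IsPacking P ∧ ew w M + cw w M N ≤ pw w P := by
  have hcov : ∀ v, covered M v := hM.covered_of_card_eq (by omega)
  set U := M \ N.biUnion (touching M)
  have hUcard : N.card = U.card := by
    rw [card_sdiff_of_subset (biUnion_subset.2 fun e _ => touching_subset M e),
      card_biUnion (pairwiseDisjoint_touching hNsep),
      sum_congr rfl fun e he => card_touching hM hcov (hNG e he) (hNM e he)]
    simp only [sum_const, smul_eq_mul]
    omega
  set σ := Finset.equivOfCardEq hUcard
  have hσU : ∀ e : N, (σ e : Sym2 V) ∈ U := fun e => (σ e).2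
  choose A B hsub hAB hwt using fun e : N => exists_pathPair hM hw hcov (hNG e e.2) (hNM e e.2)
    (mem_sdiff.1 (hσU e)).1 fun h => (mem_sdiff.1 (hσU e)).2 (mem_biUnion.2 ⟨e, e.2, h⟩)
  obtain ⟨P, hP, hPw⟩ := exists_packing_of_blocks hM
    (fun e => insert_subset (mem_sdiff.1 (hσU e)).1 (touching_subset M e))
    (pairwise_disjoint_insert_touching hNsep (Subtype.coe_injective.comp σ.injective)
      fun e => (mem_sdiff.1 (hσU e)).2) hsub hAB (by rw [Fintype.card_coe]; omega) w
  refine ⟨P, hP, ?_⟩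
  calc ew w M + cw w M N = ∑ e : N, (ew w (touching M e) + cost w M e + w (σ e)) := by
        rw [ew_eq_sum_touching_add_sdiff hNsep, cw, ew, ← sum_coe_sort N, ← sum_coe_sort N,
          ← sum_coe_sort U, ← σ.sum_comp, sum_add_distrib, sum_add_distrib]
        ring
    _ ≤ ∑ e : N, ((A e).wt w + (B e).wt w) := sum_le_sum fun e _ => hwt e
    _ = pw w P := hPw.symm

end MW3PP
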